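/- arXiv:2511.03861 — 4 statements merged into one kernel-verified Lean document; each statement's English description precedes it below -/
import Mathlib

section
/- For every positive integer m, the natural density of the set of positive integers n such that the ternary expansion of 2^n begins with the ternary expansion of m (i.e., 2^n = 3^k·m + r for some k ≥ 0 and 0 ≤ r < 3^k) equals log₃(m+1) − log₃(m). -/
/-!
The ternary expansion of `2^n` begins with that of `m` iff `3^k m ≤ 2^n < 3^k (m + 1)` for some
`k ≥ 0`, i.e. (as soon as `2^n ≥ m`) iff the fractional part of `n log₃ 2 - log₃ m` is less than
`c = log₃ (m + 1) - log₃ m`. Since `log₃ 2` is irrational, the rotation by `log₃ 2` of `ℝ/ℤ` is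
uniquely ergodic (Weyl): Birkhoff averages of the characters `fourier k`, `k ≠ 0`, are geometric
averages tending to `0`, and trigonometric polynomials are dense in `C(ℝ/ℤ, ℂ)`. So the empirical
measures along the orbit converge weakly to Lebesgue measure, and by the portmanteau theorem the
orbit visits the arc `[0, c)`, whose boundary is null, with frequency `c`.
-/

open Filter Classical
noncomputable section

open Topology MeasureTheory Set Finset Real
open scoped ENNReal BoundedContinuousFunction

theorem tendsto_inv_mul_geom_sum_zero {𝕜 : Type*} [RCLike 𝕜] {z : 𝕜} (hz : ‖z‖ ≤ 1)
    (hz1 : z ≠ 1) :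
    Tendsto (fun N : ℕ => (N : 𝕜)⁻¹ * ∑ n ∈ range N, z ^ n) atTop (𝓝 0) := by
  refine squeeze_zero_norm (fun N => ?_)
    (tendsto_const_div_atTop_nhds_zero_nat (2 / ‖z - 1‖))
  have hzN : ‖z ^ N - 1‖ ≤ 2 := (norm_sub_le _ _).trans <| by
    rw [norm_pow, norm_one]; linarith [pow_le_one₀ (norm_nonneg z) hz (n := N)]
  rw [geom_sum_eq hz1, norm_mul, norm_div, norm_inv, RCLike.norm_natCast, inv_mul_eq_div]
  gcongr

section BirkhoffContinuous

variable {𝕜 X E : Type*} [RCLike 𝕜] [NormedAddCommGroup E] [NormedSpace 𝕜 E]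

theorem norm_birkhoffAverage_le (φ : X → X) {g : X → E} {C : ℝ} (hC : 0 ≤ C)
    (hg : ∀ y, ‖g y‖ ≤ C) (N : ℕ) (x : X) : ‖birkhoffAverage 𝕜 φ g N x‖ ≤ C := by
  rcases eq_or_ne N 0 with rfl | hN
  · simpa using hC
  calc ‖birkhoffAverage 𝕜 φ g N x‖ = (N : ℝ)⁻¹ * ‖birkhoffSum φ g N x‖ := by
        rw [birkhoffAverage, norm_smul, norm_inv, RCLike.norm_natCast]
    _ ≤ (N : ℝ)⁻¹ * (N * C) := by
        gcongr
        simpa [birkhoffSum] using norm_sum_le_of_le (range N) fun n _ => hg (φ^[n] x)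
    _ = C := inv_mul_cancel_left₀ (Nat.cast_ne_zero.2 hN) C

variable [TopologicalSpace X] [CompactSpace X]

theorem lipschitzWith_birkhoffAverage_continuousMap (φ : X → X) (N : ℕ) (x : X) :
    LipschitzWith 1 fun f : C(X, E) => birkhoffAverage 𝕜 φ f N x :=
  LipschitzWith.of_dist_le_mul fun f g => by
    rw [NNReal.coe_one, one_mul, dist_eq_norm, ← Pi.sub_apply (birkhoffAverage 𝕜 φ f N),
      ← Pi.sub_apply (birkhoffAverage 𝕜 φ f), ← birkhoffAverage_sub, ← ContinuousMap.coe_sub]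
    exact norm_birkhoffAverage_le φ dist_nonneg (fun y => (dist_eq_norm f g) ▸
      ContinuousMap.norm_coe_le_norm (f - g) y) N x

variable [MeasurableSpace X] [OpensMeasurableSpace X]

theorem ContinuousMap.integrable_of_compactSpace (μ : Measure X) [IsFiniteMeasure μ]
    (f : C(X, E)) : Integrable f μ :=
  f.continuous.integrable_of_hasCompactSupport (isClosed_tsupport _).isCompact

variable [NormedSpace ℝ E]

theorem lipschitzWith_integral_continuousMap (μ : Measure X) [IsProbabilityMeasure μ] :
    LipschitzWith 1 fun f : C(X, E) => ∫ y, f y ∂μ :=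
  LipschitzWith.of_dist_le_mul fun f g => by
    rw [NNReal.coe_one, one_mul, dist_eq_norm,
      ← integral_sub (f.integrable_of_compactSpace μ) (g.integrable_of_compactSpace μ)]
    simpa using norm_integral_le_of_norm_le_const (μ := μ)
      (Eventually.of_forall fun y => (dist_eq_norm f g) ▸ ContinuousMap.norm_coe_le_norm (f - g) y)

end BirkhoffContinuous

namespace AddCircle

variable {T : ℝ}

theorem fourier_add_nsmul (k : ℤ) (x a : AddCircle T) (n : ℕ) :
    fourier k (x + n • a) = fourier k x * fourier k a ^ n := by
  simp only [fourier_apply, smul_add, smul_comm k n, toCircle_add, toCircle_nsmul,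
    Circle.coe_mul, Circle.coe_pow]

theorem birkhoffAverage_fourier (k : ℤ) (a x : AddCircle T) (N : ℕ) :
    birkhoffAverage ℂ (· + a) (fourier k) N x =
      fourier k x * ((N : ℂ)⁻¹ * ∑ n ∈ range N, fourier k a ^ n) := by
  simp only [birkhoffAverage, birkhoffSum, add_right_iterate_apply, fourier_add_nsmul,
    ← mul_sum, smul_eq_mul]
  ring

theorem fourier_ne_one [hT : Fact (0 < T)] {a : AddCircle T} (ha : ¬IsOfFinAddOrder a) {k : ℤ}
    (hk : k ≠ 0) : fourier k a ≠ 1 := by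
  intro h
  refine ha (isOfFinAddOrder_iff_zsmul_eq_zero.mpr ⟨k, hk, injective_toCircle hT.out.ne' ?_⟩)
  rw [toCircle_zero]
  exact Subtype.ext h

theorem integral_fourier_of_ne_zero [hT : Fact (0 < T)] {k : ℤ} (hk : k ≠ 0) :
    ∫ t : AddCircle T, fourier k t ∂haarAddCircle = (0 : ℂ) :=
  integral_eq_zero_of_add_right_eq_neg (fourier_add_half_inv_index hk hT.out)

theorem tendsto_birkhoffAverage_fourier [Fact (0 < T)] {a : AddCircle T}
    (ha : ¬IsOfFinAddOrder a) (k : ℤ) (x : AddCircle T) :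
    Tendsto (birkhoffAverage ℂ (· + a) (fourier k) · x) atTop
      (𝓝 (∫ t : AddCircle T, fourier k t ∂haarAddCircle)) := by
  simp_rw [birkhoffAverage_fourier]
  rcases eq_or_ne k 0 with rfl | hk
  · simp only [fourier_zero, one_pow, sum_const, card_range, nsmul_eq_mul, mul_one, one_mul,
      integral_const, probReal_univ, one_smul]
    exact tendsto_const_nhds.congr'
      ((eventually_ne_atTop 0).mono fun N hN => (inv_mul_cancel₀ (Nat.cast_ne_zero.2 hN)).symm)
  · rw [integral_fourier_of_ne_zero hk, ← mul_zero (fourier k x : ℂ)]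
    exact (tendsto_inv_mul_geom_sum_zero (Circle.norm_coe _).le (fourier_ne_one ha hk)).const_mul _

theorem tendsto_birkhoffAverage_integral [Fact (0 < T)] {a : AddCircle T}
    (ha : ¬IsOfFinAddOrder a) (f : C(AddCircle T, ℂ)) (x : AddCircle T) :
    Tendsto (birkhoffAverage ℂ (· + a) f · x) atTop
      (𝓝 (∫ t, f t ∂haarAddCircle)) := by
  -- Both sides are 1-Lipschitz in `f`, so the `f` for which the claim holds form a closed set.
  let S : Set C(AddCircle T, ℂ) := {f | Tendsto (birkhoffAverage ℂ (· + a) f · x) atTop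
      (𝓝 (∫ t, f t ∂haarAddCircle))}
  have hS : IsClosed S := Equicontinuous.isClosed_setOfPred_tendsto
    (LipschitzWith.uniformEquicontinuous _ 1 fun N =>
      lipschitzWith_birkhoffAverage_continuousMap _ N x).equicontinuous
    (lipschitzWith_integral_continuousMap _).continuous
  have hspan : ((Submodule.span ℂ (range (fourier (T := T)))) : Set C(AddCircle T, ℂ)) ⊆ S := by
    intro f hf
    induction hf using Submodule.span_induction with
    | mem f hf =>
      obtain ⟨k, rfl⟩ := hf
      exact tendsto_birkhoffAverage_fourier ha k x
    | zero => simp [S, birkhoffAverage, birkhoffSum]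
    | add f g _ _ hf hg =>
      simp only [S, mem_ofPred_eq, ContinuousMap.coe_add, birkhoffAverage_add, Pi.add_apply,
        integral_add (f.integrable_of_compactSpace _) (g.integrable_of_compactSpace _)]
      exact hf.add hg
    | smul c f _ hf =>
      simpa [S, birkhoffAverage, birkhoffSum, mul_sum, integral_const_mul, mul_left_comm c]
        using hf.const_smul c
  have hall := hS.closure_subset_iff.2 hspan
  rw [← Submodule.topologicalClosure_coe, span_fourier_closure_eq_top] at hall
  exact hall trivial

theorem tendsto_birkhoffAverage_integral_real [Fact (0 < T)] {a : AddCircle T}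
    (ha : ¬IsOfFinAddOrder a) (f : C(AddCircle T, ℝ)) (x : AddCircle T) :
    Tendsto (birkhoffAverage ℝ (· + a) f · x) atTop (𝓝 (∫ t, f t ∂haarAddCircle)) := by
  have h := (Complex.continuous_re.tendsto _).comp
    (tendsto_birkhoffAverage_integral ha (ContinuousMap.comp ⟨_, Complex.continuous_ofReal⟩ f) x)
  simp only [ContinuousMap.comp_apply, ContinuousMap.coe_mk, integral_complex_ofReal,
    Complex.ofReal_re] at h
  refine h.congr fun N => ?_
  simp [birkhoffAverage, birkhoffSum, ← Complex.ofReal_sum]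

end AddCircle

section OrbitMeasure

variable {X : Type*} [MeasurableSpace X]

def orbitMeasure (φ : X → X) (x : X) (N : ℕ) : Measure X :=
  (N : ℝ≥0∞)⁻¹ • ∑ n ∈ range N, Measure.dirac (φ^[n] x)

variable (φ : X → X) (x : X)

theorem isProbabilityMeasure_orbitMeasure {N : ℕ} (hN : N ≠ 0) :
    IsProbabilityMeasure (orbitMeasure φ x N) :=
  ⟨by simp [orbitMeasure, ENNReal.inv_mul_cancel (Nat.cast_ne_zero.2 hN)]⟩

variable [MeasurableSingletonClass X]

theorem integral_orbitMeasure (f : X → ℝ) (N : ℕ) :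
    ∫ y, f y ∂orbitMeasure φ x N = birkhoffAverage ℝ φ f N x := by
  rw [orbitMeasure, integral_smul_measure, integral_finsetSum_measure
    fun n _ => integrable_dirac enorm_lt_top]
  simp [birkhoffAverage, birkhoffSum, integral_dirac]

theorem orbitMeasure_real_apply (E : Set X) (N : ℕ) :
    (orbitMeasure φ x N).real E = birkhoffAverage ℝ φ (E.indicator 1) N x := by
  simp [orbitMeasure, birkhoffAverage, birkhoffSum, measureReal_def, Measure.dirac_apply,
    Set.indicator_apply]

end OrbitMeasure

theorem tendsto_birkhoffAverage_indicator_of_null_frontier {X : Type*} [TopologicalSpace X]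
    [MeasurableSpace X] [OpensMeasurableSpace X] [HasOuterApproxClosed X]
    [MeasurableSingletonClass X] {μ : Measure X} [IsProbabilityMeasure μ] {φ : X → X} {x : X}
    (h : ∀ f : X →ᵇ ℝ, Tendsto (birkhoffAverage ℝ φ f · x) atTop (𝓝 (∫ y, f y ∂μ)))
    {E : Set X} (hE : μ (frontier E) = 0) :
    Tendsto (birkhoffAverage ℝ φ (E.indicator 1) · x) atTop (𝓝 (μ.real E)) := by
  -- shifted by one, since `orbitMeasure φ x 0 = 0` is not a probability measure
  let ν : ℕ → ProbabilityMeasure X := fun N =>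
    ⟨orbitMeasure φ x (N + 1), isProbabilityMeasure_orbitMeasure φ x N.succ_ne_zero⟩
  have hν : Tendsto ν atTop (𝓝 ⟨μ, ‹_›⟩) :=
    ProbabilityMeasure.tendsto_iff_forall_integral_tendsto.2 fun f => by
      simpa [ν, integral_orbitMeasure] using (tendsto_add_atTop_iff_nat 1).2 (h f)
  have hνE := (ENNReal.tendsto_toReal (measure_ne_top μ E)).comp
    (ProbabilityMeasure.tendsto_measure_of_null_frontier_of_tendsto' hν hE)
  refine (tendsto_add_atTop_iff_nat 1).1 ?_
  simpa [ν, ← orbitMeasure_real_apply, measureReal_def, Function.comp_def] using hνE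

instance {T : ℝ} [Fact (0 < T)] : NullSingletonClass (volume : Measure (AddCircle T)) :=
  ⟨fun x => by simp [← Metric.closedBall_zero, AddCircle.volume_closedBall]⟩

namespace UnitAddCircle

def arcIco (c : ℝ) : Set UnitAddCircle := {y | (AddCircle.equivIco 1 0 y : ℝ) < c}

variable {c : ℝ}

theorem coe_mem_arcIco (t : ℝ) : (t : UnitAddCircle) ∈ arcIco c ↔ Int.fract t < c := by
  simp [arcIco, AddCircle.coe_equivIco_mk_apply]

theorem measurableSet_arcIco (c : ℝ) : MeasurableSet (arcIco c) :=
  measurableSet_lt (measurable_subtype_coe.comp (AddCircle.measurableEquivIco 1 0).measurable)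
    measurable_const

theorem frontier_arcIco_subset (c : ℝ) : frontier (arcIco c) ⊆ {0, (c : UnitAddCircle)} := by
  intro y hy
  by_contra hne
  simp only [mem_insert_iff, mem_singleton_iff, not_or] at hne
  have hcont : ContinuousAt (fun z => (AddCircle.equivIco 1 0 z : ℝ)) y :=
    continuous_subtype_val.continuousAt.comp (AddCircle.continuousAt_equivIco 1 0 hne.1)
  rcases lt_trichotomy (AddCircle.equivIco 1 0 y : ℝ) c with hlt | heq | hgt
  · exact hy.2 (mem_interior_iff_mem_nhds.2 (hcont.preimage_mem_nhds (Iio_mem_nhds hlt)))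
  · exact hne.2 (by rw [← heq]; exact ((AddCircle.equivIco 1 0).symm_apply_apply y).symm)
  · rw [← frontier_compl] at hy
    exact hy.2 (mem_interior_iff_mem_nhds.2 (mem_of_superset
      (hcont.preimage_mem_nhds (Ioi_mem_nhds hgt)) fun _ (hz : c < _) => hz.not_gt))

theorem volume_frontier_arcIco (c : ℝ) : volume (frontier (arcIco c)) = 0 :=
  measure_mono_null (frontier_arcIco_subset c) ((toFinite _).measure_zero _)

theorem volume_arcIco (hc₀ : 0 ≤ c) (hc₁ : c < 1) : volume (arcIco c) = ENNReal.ofReal c := by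
  -- in the fundamental domain `(c - 1, c]` the points with fractional part `< c` are `[0, c)`
  rw [AddCircle.add_projection_respects_measure 1 (c - 1) (measurableSet_arcIco c),
    sub_add_cancel]
  convert Real.volume_Ico (a := 0) (b := c) using 2
  · ext t
    rw [Set.mem_inter_iff, Set.mem_preimage, coe_mem_arcIco, Set.mem_Ioc, Set.mem_Ico]
    constructor
    · rintro ⟨hf, ht₁, ht₂⟩
      have h₀ : 0 ≤ t := by
        by_contra! hneg
        have : ⌊t⌋ = -1 := Int.floor_eq_iff.2 ⟨by push_cast; linarith, by push_cast; linarith⟩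
        rw [Int.fract, this] at hf
        push_cast at hf
        linarith
      rw [Int.fract_eq_self.2 ⟨h₀, by linarith⟩] at hf
      exact ⟨h₀, hf⟩
    · rintro ⟨h₀, hc⟩
      rw [Int.fract_eq_self.2 ⟨h₀, by linarith⟩]
      exact ⟨hc, by linarith, hc.le⟩
  · ring

end UnitAddCircle

theorem Irrational.tendsto_card_filter_fract_lt_div {α : ℝ} (hα : Irrational α) (β : ℝ)
    {c : ℝ} (hc₀ : 0 ≤ c) (hc₁ : c < 1) :
    Tendsto (fun N : ℕ => (#{n ∈ Finset.Icc 1 N | Int.fract ((n : ℕ) * α + β) < c} : ℝ) / N)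
      atTop (𝓝 c) := by
  have ha : ¬IsOfFinAddOrder (α : UnitAddCircle) := by
    rw [AddCircle.not_isOfFinAddOrder_iff_forall_rat_ne_div, div_one]
    exact fun q => (hα.ne_rat q).symm
  have hvol : (volume : Measure UnitAddCircle) = AddCircle.haarAddCircle := by
    simp [AddCircle.volume_eq_smul_haarAddCircle]
  have h := tendsto_birkhoffAverage_indicator_of_null_frontier
    (x := ((α + β : ℝ) : UnitAddCircle))
    (fun f => AddCircle.tendsto_birkhoffAverage_integral_real ha f.toContinuousMap _)
    (hvol ▸ UnitAddCircle.volume_frontier_arcIco c)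
  rw [measureReal_def, ← hvol, UnitAddCircle.volume_arcIco hc₀ hc₁, ENNReal.toReal_ofReal hc₀] at h
  refine h.congr fun N => ?_
  have hpt (n : ℕ) : ((α + β : ℝ) : UnitAddCircle) + n • (α : UnitAddCircle) =
      (((n + 1 : ℕ) * α + β : ℝ) : UnitAddCircle) := by
    rw [← AddCircle.coe_nsmul, ← AddCircle.coe_add]
    congr 1
    push_cast
    ring
  rw [natCast_card_filter, ← Finset.Ico_add_one_right_eq_Icc, sum_Ico_eq_sum_range]
  simp only [birkhoffAverage, birkhoffSum, add_right_iterate_apply, hpt, Set.indicator_apply,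
    UnitAddCircle.coe_mem_arcIco, Pi.one_apply, smul_eq_mul, div_eq_inv_mul, add_comm 1,
    Nat.add_sub_cancel]

theorem irrational_logb_of_coprime {a b : ℕ} (ha : 1 < a) (hb : 1 < b) (hab : a.Coprime b) :
    Irrational (logb b a) := by
  rintro ⟨q, hq⟩
  have hq₀ : 0 < q := by
    exact_mod_cast hq ▸ logb_pos (Nat.one_lt_cast.2 hb) (Nat.one_lt_cast.2 ha)
  obtain ⟨n, hn⟩ : ∃ n : ℕ, q.num = n :=
    ⟨q.num.toNat, (Int.toNat_of_nonneg (Rat.num_nonneg.2 hq₀.le)).symm⟩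
  have hpow : (a : ℝ) ^ q.den = (b : ℝ) ^ n := by
    have hmul : (q : ℝ) * q.den = n := by
      exact_mod_cast (show q * q.den = n by rw [Rat.mul_den_eq_num, hn, Int.cast_natCast])
    rw [← rpow_logb (b := b) (x := a) (by positivity) (by exact_mod_cast hb.ne') (by positivity),
      ← hq, ← rpow_natCast, ← rpow_mul (by positivity), hmul, rpow_natCast]
  have hpow' : a ^ q.den = b ^ n := by exact_mod_cast hpow
  have hn₀ : n ≠ 0 := by
    rintro rfl
    exact hq₀.ne' (Rat.zero_of_num_zero (by simpa using hn))
  have := hab.pow q.den n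
  rw [hpow', Nat.coprime_self] at this
  exact (Nat.one_lt_pow hn₀ hb).ne' this

theorem exists_nat_le_lt_add_iff_fract_lt {t c : ℝ} (ht : 0 ≤ t) (hc : c ≤ 1) :
    (∃ k : ℕ, (k : ℝ) ≤ t ∧ t < k + c) ↔ Int.fract t < c := by
  constructor
  · rintro ⟨k, hk, hkt⟩
    have hfloor : ⌊t⌋ = k := Int.floor_eq_iff.2 ⟨by exact_mod_cast hk, by push_cast; linarith⟩
    rw [Int.fract, hfloor]
    push_cast
    linarith
  · intro h
    refine ⟨⌊t⌋₊, Nat.floor_le ht, ?_⟩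
    rw [natCast_floor_eq_intCast_floor ht]
    linarith [Int.self_sub_floor t]

theorem exists_eq_pow_mul_add_iff_fract_lt {b m A : ℕ} (hb : 2 ≤ b) (hm : 0 < m) (hmA : m ≤ A) :
    (∃ k r : ℕ, A = b ^ k * m + r ∧ r < b ^ k) ↔
      Int.fract (logb b A - logb b m) < logb b (m + 1) - logb b m := by
  have hb₁ : (1 : ℝ) < b := by exact_mod_cast hb
  have hm₀ : (0 : ℝ) < m := by exact_mod_cast hm
  have hA₀ : (0 : ℝ) < A := by exact_mod_cast hm.trans_le hmA
  have logb_pow_mul (k : ℕ) {x : ℝ} (hx : 0 < x) : logb b (b ^ k * x) = k + logb b x := by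
    rw [logb_mul (by positivity) hx.ne', logb_pow, logb_self_eq_one hb₁, mul_one]
  have hdigits : (∃ k r : ℕ, A = b ^ k * m + r ∧ r < b ^ k) ↔
      ∃ k : ℕ, b ^ k * m ≤ A ∧ A < b ^ k * (m + 1) := by
    refine ⟨fun ⟨k, r, hA, hr⟩ => ⟨k, by rw [mul_add]; omega⟩,
      fun ⟨k, h₁, h₂⟩ => ⟨k, A - b ^ k * m, by omega, by rw [mul_add] at h₂; omega⟩⟩
  rw [hdigits, ← exists_nat_le_lt_add_iff_fract_lt]
  · refine exists_congr fun k => and_congr ?_ ?_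
    · rw [← Nat.cast_le (α := ℝ), ← logb_le_logb hb₁ (by positivity) hA₀]
      push_cast
      rw [logb_pow_mul k hm₀, le_sub_iff_add_le]
    · rw [← Nat.cast_lt (α := ℝ), ← logb_lt_logb_iff hb₁ hA₀ (by positivity)]
      push_cast
      rw [logb_pow_mul k (by positivity)]
      constructor <;> intro h <;> linarith
  · exact sub_nonneg.2 (logb_le_logb_of_le hb₁ hm₀ (by exact_mod_cast hmA))
  · have h₂ : (2 : ℝ) ≤ b := by exact_mod_cast hb
    have h₁ : (1 : ℝ) ≤ m := by exact_mod_cast hm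
    have h := logb_le_logb_of_le hb₁ (by positivity) (show (m : ℝ) + 1 ≤ b ^ 1 * m by nlinarith)
    rw [logb_pow_mul 1 hm₀, Nat.cast_one] at h
    linarith

theorem card_filter_le_card_filter_add {P Q : ℕ → Prop} [DecidablePred P] [DecidablePred Q]
    {n₀ : ℕ} (h : ∀ n ≥ n₀, P n → Q n) (s : Finset ℕ) :
    #{n ∈ s | P n} ≤ #{n ∈ s | Q n} + n₀ :=
  calc #{n ∈ s | P n} ≤ #({n ∈ s | Q n} ∪ range n₀) := by
        refine card_le_card fun n hn => ?_
        rw [mem_filter] at hn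
        rcases le_or_gt n₀ n with hn₀ | hn₀
        · exact mem_union_left _ (mem_filter.2 ⟨hn.1, h n hn₀ hn.2⟩)
        · exact mem_union_right _ (mem_range.2 hn₀)
    _ ≤ #{n ∈ s | Q n} + n₀ := (Finset.card_union_le _ _).trans_eq (by rw [card_range])

theorem tendsto_card_filter_Icc_div_congr {P Q : ℕ → Prop} [DecidablePred P] [DecidablePred Q]
    (hPQ : ∀ᶠ n in atTop, P n ↔ Q n) {l : ℝ}
    (hQ : Tendsto (fun N : ℕ => (#{n ∈ Icc 1 N | Q n} : ℝ) / N) atTop (𝓝 l)) :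
    Tendsto (fun N : ℕ => (#{n ∈ Icc 1 N | P n} : ℝ) / N) atTop (𝓝 l) := by
  obtain ⟨n₀, hn₀⟩ := eventually_atTop.1 hPQ
  have hdiff (N : ℕ) : |(#{n ∈ Icc 1 N | P n} : ℝ) - #{n ∈ Icc 1 N | Q n}| ≤ n₀ := by
    have hPQ : (#{n ∈ Icc 1 N | P n} : ℝ) ≤ #{n ∈ Icc 1 N | Q n} + n₀ := by
      exact_mod_cast card_filter_le_card_filter_add (fun n hn => (hn₀ n hn).1) (Icc 1 N)
    have hQP : (#{n ∈ Icc 1 N | Q n} : ℝ) ≤ #{n ∈ Icc 1 N | P n} + n₀ := by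
      exact_mod_cast card_filter_le_card_filter_add (fun n hn => (hn₀ n hn).2) (Icc 1 N)
    exact abs_sub_le_iff.2 ⟨by linarith, by linarith⟩
  have hsmall : Tendsto (fun N : ℕ => ((#{n ∈ Icc 1 N | P n} : ℝ) - #{n ∈ Icc 1 N | Q n}) / N)
      atTop (𝓝 0) :=
    squeeze_zero_norm (fun N => by
        rw [norm_div, Real.norm_natCast]; exact div_le_div_of_nonneg_right (hdiff N) N.cast_nonneg)
      (tendsto_const_div_atTop_nhds_zero_nat (n₀ : ℝ))
  simpa [sub_div] using hQ.add hsmall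

/-- Benford's Law for ternary digits: for every positive integer `m`, the natural density of
the set of `n` such that the ternary expansion of `2^n` begins with that of `m`
(i.e. `2^n = 3^k·m + r` with `0 ≤ r < 3^k`) equals `log₃(m+1) − log₃ m`. -/
theorem benford_ternary (m : ℕ) (hm : 0 < m) :
    Tendsto (fun N : ℕ =>
        (((Finset.Icc 1 N).filter (fun n : ℕ =>
            ∃ k r : ℕ, 2 ^ n = 3 ^ k * m + r ∧ r < 3 ^ k)).card : ℝ) / (N : ℝ))
      atTop
      (nhds (Real.log (m + 1) / Real.log 3 - Real.log m / Real.log 3)) := by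
  have hm₁ : (1 : ℝ) ≤ m := by exact_mod_cast hm
  have hc₀ : 0 ≤ logb 3 (m + 1) - logb 3 m :=
    sub_nonneg.2 (logb_le_logb_of_le (by norm_num) (by positivity) (by linarith))
  have hc₁ : logb 3 (m + 1) - logb 3 m < 1 := by
    have h := logb_lt_logb (b := 3) (by norm_num) (by positivity)
      (show (m : ℝ) + 1 < 3 * m by linarith)
    rw [logb_mul (by norm_num) (by positivity), logb_self_eq_one (by norm_num)] at h
    linarith
  have hirr : Irrational (logb 3 2) := by
    simpa using irrational_logb_of_coprime (a := 2) (b := 3) (by norm_num) (by norm_num)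
      (by norm_num)
  change Tendsto _ atTop (𝓝 (logb 3 (m + 1) - logb 3 m))
  refine tendsto_card_filter_Icc_div_congr ?_
    (hirr.tendsto_card_filter_fract_lt_div (-logb 3 m) hc₀ hc₁)
  filter_upwards [eventually_ge_atTop m] with n hn
  rw [exists_eq_pow_mul_add_iff_fract_lt (by norm_num) hm (hn.trans Nat.lt_two_pow_self.le)]
  push_cast
  rw [logb_pow, sub_eq_add_neg]
end
end

section
/- For each digit d ∈ {0,1,2} and H ≥ 0, the difference Σ_{m' = 3^H}^{3^(H+1) − 1} (log₃(3m'+d+1) − log₃(3m'+d)) − 1/3 is O(3^{−H}); in particular there is a constant K such that the absolute value of this difference is at most K·3^{−H} for all H. -/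
/-! Both `log (3m + d + 1) - log (3m + d)` and `(log (m + 1) - log m) / 3` lie in
`[1/(3m+3), 1/(3m)]`, so they differ by at most `1/m²`. The second telescopes over the block
`3^H ≤ m < 3^(H+1)` to `log 3 / 3`; the block has `2·3^H` terms, each within `9^(-H)`, so the
total error is at most `2·3^(-H)`. -/
open Real Finset

namespace Real

lemma inv_add_one_le_log_add_one_sub_log {x : ℝ} (hx : 0 < x) :
    (x + 1)⁻¹ ≤ log (x + 1) - log x := by
  have h := one_sub_inv_le_log_of_pos (show 0 < (x + 1) / x by positivity)
  rw [log_div (by positivity) hx.ne'] at h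
  calc (x + 1)⁻¹ = 1 - ((x + 1) / x)⁻¹ := by field_simp; ring
    _ ≤ _ := h

lemma log_add_one_sub_log_le_inv {x : ℝ} (hx : 0 < x) :
    log (x + 1) - log x ≤ x⁻¹ := by
  have h := log_le_sub_one_of_pos (show 0 < (x + 1) / x by positivity)
  rw [log_div (by positivity) hx.ne'] at h
  calc _ ≤ (x + 1) / x - 1 := h
    _ = x⁻¹ := by field_simp; ring

end Real

lemma abs_log_add_one_sub_log_sub_div_le {b c x : ℝ} (hb : 1 ≤ b) (hc₀ : 0 ≤ c)
    (hcb : c + 1 ≤ b) (hx : 0 < x) :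
    |(log (b * x + c + 1) - log (b * x + c)) - (log (x + 1) - log x) / b| ≤ (x ^ 2)⁻¹ := by
  have hb₀ : 0 < b := by linarith
  have hbx : 0 < b * x := by positivity
  have hbxc : 0 < b * x + c := by positivity
  calc _ ≤ (b * x)⁻¹ - (b * x + b)⁻¹ := by
        apply abs_sub_le_of_le_of_le
        · calc (b * x + b)⁻¹ ≤ (b * x + c + 1)⁻¹ := inv_anti₀ (by positivity) (by linarith)
            _ ≤ _ := inv_add_one_le_log_add_one_sub_log hbxc
        · calc _ ≤ (b * x + c)⁻¹ := log_add_one_sub_log_le_inv hbxc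
            _ ≤ (b * x)⁻¹ := inv_anti₀ hbx (by linarith)
        · calc (b * x + b)⁻¹ = (x + 1)⁻¹ / b := by field_simp
            _ ≤ _ := by gcongr; exact inv_add_one_le_log_add_one_sub_log hx
        · calc _ ≤ x⁻¹ / b := by gcongr; exact log_add_one_sub_log_le_inv hx
            _ = (b * x)⁻¹ := by field_simp
    _ = (b * x * (x + 1))⁻¹ := by field_simp; ring
    _ ≤ (x ^ 2)⁻¹ := inv_anti₀ (by positivity) (by nlinarith)

lemma sum_Ico_log_add_one_sub_log {a b : ℕ} (hab : a ≤ b) :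
    ∑ m ∈ Ico a b, (log ((m : ℝ) + 1) - log m) = log b - log a := by
  simpa using sum_Ico_sub (fun m : ℕ => log (m : ℝ)) hab

lemma abs_sum_Ico_log_increment_sub_le {c : ℝ} (hc₀ : 0 ≤ c) (hc₂ : c ≤ 2) (H : ℕ) :
    |∑ m ∈ Ico ((3 : ℕ) ^ H) (3 ^ (H + 1)), (log (3 * (m : ℝ) + c + 1) - log (3 * m + c))
        - log 3 / 3| ≤ 2 * 3⁻¹ ^ H := by
  have hpow : 3 ^ H ≤ 3 ^ (H + 1) := Nat.pow_le_pow_right (by norm_num) H.le_succ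
  have htelescope : ∑ m ∈ Ico ((3 : ℕ) ^ H) (3 ^ (H + 1)), (log ((m : ℝ) + 1) - log m) / 3
      = log 3 / 3 := by
    rw [← sum_div, sum_Ico_log_add_one_sub_log hpow]
    push_cast
    rw [log_pow, log_pow]
    push_cast
    ring
  rw [← htelescope, ← sum_sub_distrib]
  calc _ ≤ ∑ m ∈ Ico ((3 : ℕ) ^ H) (3 ^ (H + 1)),
        |(log (3 * (m : ℝ) + c + 1) - log (3 * m + c)) - (log ((m : ℝ) + 1) - log m) / 3| :=
        abs_sum_le_sum_abs _ _
    _ ≤ ∑ m ∈ Ico ((3 : ℕ) ^ H) (3 ^ (H + 1)), (((3 : ℝ) ^ H) ^ 2)⁻¹ := by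
        refine sum_le_sum fun m hm => ?_
        have hm : (3 : ℝ) ^ H ≤ m := by exact_mod_cast (mem_Ico.mp hm).1
        have hm₀ : (0 : ℝ) < m := (by positivity : (0 : ℝ) < 3 ^ H).trans_le hm
        exact (abs_log_add_one_sub_log_sub_div_le (by norm_num) hc₀ (by linarith) hm₀).trans
          (inv_anti₀ (by positivity) (by gcongr))
    _ = 2 * 3⁻¹ ^ H := by
        rw [sum_const, Nat.card_Ico, show 3 ^ (H + 1) - 3 ^ H = 2 * 3 ^ H by rw [pow_succ]; omega,
          nsmul_eq_mul]
        push_cast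
        rw [inv_pow]
        field_simp

/-- The sum `Σ_{m' = 3^H}^{3^(H+1)−1} (log₃(3m'+d+1) − log₃(3m'+d))` differs from `1/3`
by `O(3^{-H})`. -/
theorem sum_log_diff_is_third (d : ℕ) (hd : d ∈ ({0, 1, 2} : Finset ℕ)) :
    ∃ K : ℝ, 0 < K ∧ ∀ H : ℕ,
      |(∑ m' ∈ Finset.Ico ((3:ℕ) ^ H) (3 ^ (H + 1)),
          (Real.log (3 * (m' : ℝ) + d + 1) / Real.log 3 -
            Real.log (3 * (m' : ℝ) + d) / Real.log 3)) - 1 / 3| ≤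
        K * (3 : ℝ)⁻¹ ^ H := by
  have hd₂ : (d : ℝ) ≤ 2 := by
    simp only [mem_insert, mem_singleton] at hd
    rcases hd with rfl | rfl | rfl <;> norm_num
  have hlog : 0 < log 3 := log_pos (by norm_num)
  refine ⟨2 / log 3, by positivity, fun H => ?_⟩
  have hbound := abs_sum_Ico_log_increment_sub_le d.cast_nonneg hd₂ H
  rw [← sum_congr rfl fun _ _ => sub_div _ _ _, ← sum_div,
    show (1 / 3 : ℝ) = log 3 / 3 / log 3 by field_simp, ← sub_div, abs_div, abs_of_pos hlog,
    div_le_iff₀ hlog]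
  calc _ ≤ 2 * 3⁻¹ ^ H := hbound
    _ = 2 / log 3 * 3⁻¹ ^ H * log 3 := by field_simp
end

section
/- Define L_{d,H} = Σ_{m = 3^H}^{3^(H+1) − 1} γ_d(m)·(log₃(m+1) − log₃(m)), where γ_d(m) counts ternary digits of m equal to d. Then L_{d,H}/(H+1) → 1/3 as H → ∞. -/
/-!
Write `m ∈ [3^(H+1), 3^(H+2))` as `m = 3q + r` with `q ∈ [3^H, 3^(H+1))` and last digit `r < 3`.
The digit count of `m` is that of `q` plus `[r = d]`, and the log-increments of `3q`, `3q+1`, `3q+2`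
add up to that of `q`; hence `L_{d,H+1} = L_{d,H} + Σ_q log₃((3q+d+1)/(3q+d))`. Both
`ln((3q+d+1)/(3q+d))` and `ln((q+1)/q)/3` lie between `1/(3(q+1))` and `1/(3q)`; the latter sum
exactly to `(ln 3)/3` over `q ∈ [3^H, 3^(H+1))`, and the widths `1/(3q) - 1/(3(q+1))` telescope to
`O(3^(-H))`. So the increments tend to `1/3`, and Cesàro's theorem gives `L_{d,H}/(H+1) → 1/3`.
-/

open Filter

/-- `L d H = Σ_{m = 3^H}^{3^(H+1)−1} γ_d(m)·(log₃(m+1) − log₃ m)`, where `γ_d(m)` is the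
number of ternary digits of `m` equal to `d`. -/
noncomputable def Lsum (d H : ℕ) : ℝ :=
  ∑ m ∈ Finset.Ico (3 ^ H) (3 ^ (H + 1)),
    ((Nat.digits 3 m).count d : ℝ) *
      (Real.log (m + 1) / Real.log 3 - Real.log m / Real.log 3)

open Finset Real Topology

theorem sum_range_mul_eq_sum_sum {M : Type*} [AddCommMonoid M] (f : ℕ → M) (b n : ℕ) :
    ∑ i ∈ range (b * n), f i = ∑ q ∈ range n, ∑ r ∈ range b, f (b * q + r) := by
  induction n with
  | zero => simp
  | succ n ih => rw [mul_add_one, sum_range_add, ih, sum_range_succ]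

theorem sum_Ico_mul_eq_sum_sum {M : Type*} [AddCommGroup M] (f : ℕ → M) (b : ℕ) {m n : ℕ}
    (h : m ≤ n) :
    ∑ i ∈ Ico (b * m) (b * n), f i = ∑ q ∈ Ico m n, ∑ r ∈ range b, f (b * q + r) := by
  rw [sum_Ico_eq_sub _ (Nat.mul_le_mul_left b h), sum_Ico_eq_sub _ h,
    sum_range_mul_eq_sum_sum, sum_range_mul_eq_sum_sum]

theorem Nat.digits_count_mul_add (b d : ℕ) (hb : 1 < b) {q r : ℕ} (hq : q ≠ 0) (hr : r < b) :
    (Nat.digits b (b * q + r)).count d = (Nat.digits b q).count d + if r = d then 1 else 0 := by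
  rw [add_comm, Nat.digits_add b hb r q hr (Or.inr hq), List.count_cons]
  simp only [beq_iff_eq]

theorem sum_range_logb_mul_add_succ_sub (c : ℝ) {b q : ℕ} (hb : b ≠ 0) (hq : q ≠ 0) :
    ∑ r ∈ range b, (logb c ((b * q + r : ℕ) + 1) - logb c (b * q + r : ℕ)) =
      logb c (q + 1) - logb c q := by
  have hb' : (b : ℝ) ≠ 0 := by exact_mod_cast hb
  have hq' : (q : ℝ) ≠ 0 := by exact_mod_cast hq
  have := sum_range_sub (fun r : ℕ => logb c (b * q + r : ℕ)) b
  push_cast at this ⊢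
  simp only [add_assoc] at this ⊢
  rw [this, ← mul_add_one, logb_mul hb' (by positivity), add_zero, logb_mul hb' hq']
  ring

theorem log_add_one_sub_log_mem_Icc {x : ℝ} (hx : 0 < x) :
    log (x + 1) - log x ∈ Set.Icc (x + 1)⁻¹ x⁻¹ := by
  rw [← log_div (by positivity) hx.ne']
  constructor
  · calc (x + 1)⁻¹ = 1 - ((x + 1) / x)⁻¹ := by
          rw [inv_div, one_sub_div (by positivity), add_sub_cancel_left, one_div]
      _ ≤ _ := one_sub_inv_le_log_of_pos (by positivity)
  · calc _ ≤ (x + 1) / x - 1 := log_le_sub_one_of_pos (by positivity)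
      _ = x⁻¹ := by rw [div_sub_one hx.ne', add_sub_cancel_left, one_div]

/-- The logarithmic measure of the `m ∈ [3^(H+1), 3^(H+2))` whose last ternary digit is `d`,
written as `m = 3 * q + d`. -/
noncomputable def logMeasureLastDigit (d H : ℕ) : ℝ :=
  ∑ q ∈ Ico (3 ^ H : ℕ) (3 ^ (H + 1)), (logb 3 (3 * (q : ℝ) + d + 1) - logb 3 (3 * q + d))

theorem Lsum_succ {d : ℕ} (hd : d < 3) (H : ℕ) :
    Lsum d (H + 1) = Lsum d H + logMeasureLastDigit d H := by
  simp only [Lsum, log_div_log]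
  have hsplit := sum_Ico_mul_eq_sum_sum
    (fun m => ((Nat.digits 3 m).count d : ℝ) * (logb 3 (m + 1) - logb 3 m)) 3
    (Nat.pow_le_pow_right three_pos H.le_succ)
  rw [← pow_succ', ← pow_succ'] at hsplit
  rw [hsplit, logMeasureLastDigit, ← sum_add_distrib]
  refine sum_congr rfl fun q hq => ?_
  have hq0 : q ≠ 0 := (pow_pos three_pos H).trans_le (mem_Ico.mp hq).1 |>.ne'
  calc ∑ r ∈ range 3, ((Nat.digits 3 (3 * q + r)).count d : ℝ) *
        (logb 3 ((3 * q + r : ℕ) + 1) - logb 3 (3 * q + r : ℕ))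
      = ∑ r ∈ range 3, (((Nat.digits 3 q).count d : ℝ) *
          (logb 3 ((3 * q + r : ℕ) + 1) - logb 3 (3 * q + r : ℕ)) +
          if r = d then logb 3 ((3 * q + r : ℕ) + 1) - logb 3 (3 * q + r : ℕ) else 0) := by
        refine sum_congr rfl fun r hr => ?_
        rw [Nat.digits_count_mul_add 3 d (by norm_num) hq0 (mem_range.mp hr)]
        push_cast
        split_ifs <;> ring
    _ = _ := by
        rw [sum_add_distrib, ← mul_sum, sum_range_logb_mul_add_succ_sub 3 three_ne_zero hq0,
          sum_ite_eq', if_pos (mem_range.mpr hd)]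
        push_cast
        ring

theorem abs_log_mul_add_sub_log_sub_le {b q y : ℝ} (hq : 0 < q) (hy : 0 ≤ y)
    (hyb : y + 1 ≤ b) :
    |(log (b * q + y + 1) - log (b * q + y)) - (log (q + 1) - log q) / b| ≤
      (b * q)⁻¹ - (b * (q + 1))⁻¹ := by
  have hb : 0 < b := by linarith
  obtain ⟨hlo, hhi⟩ := log_add_one_sub_log_mem_Icc (x := b * q + y) (by positivity)
  obtain ⟨hlo', hhi'⟩ := log_add_one_sub_log_mem_Icc hq
  rw [mul_inv, inv_mul_eq_div, mul_inv b (q + 1), inv_mul_eq_div]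
  apply abs_sub_le_of_le_of_le
  · calc (q + 1)⁻¹ / b = (b * q + b)⁻¹ := by
          rw [← inv_mul_eq_div, ← mul_inv, mul_add_one]
      _ ≤ (b * q + y + 1)⁻¹ := inv_anti₀ (by positivity) (by linarith)
      _ ≤ _ := hlo
  · calc _ ≤ (b * q + y)⁻¹ := hhi
      _ ≤ (b * q)⁻¹ := inv_anti₀ (by positivity) (by linarith)
      _ = q⁻¹ / b := by rw [mul_inv, inv_mul_eq_div]
  · exact div_le_div_of_nonneg_right hlo' hb.le
  · exact div_le_div_of_nonneg_right hhi' hb.le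

theorem abs_sum_log_mul_add_sub_log_sub_le {b N : ℕ} (hN : N ≠ 0) {y : ℝ} (hy : 0 ≤ y)
    (hyb : y + 1 ≤ b) :
    |∑ q ∈ Ico N (b * N), (log (b * q + y + 1) - log (b * q + y)) - log b / b| ≤
      (b * N : ℝ)⁻¹ := by
  have hb : (0 : ℝ) < b := by linarith
  have hNb : N ≤ b * N := Nat.le_mul_of_pos_left N (by exact_mod_cast hb)
  have hlog : ∑ q ∈ Ico N (b * N), (log (q + 1) - log q) / b = log b / b := by
    have := sum_Ico_sub (fun q : ℕ => log q) hNb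
    push_cast at this
    rw [← sum_div, this, log_mul hb.ne' (by positivity), add_sub_cancel_right]
  have htel : ∑ q ∈ Ico N (b * N), ((b * q : ℝ)⁻¹ - (b * (q + 1) : ℝ)⁻¹) =
      (b * N : ℝ)⁻¹ - (b * (b * N : ℕ) : ℝ)⁻¹ := by
    have := sum_Ico_sub (fun q : ℕ => -(b * q : ℝ)⁻¹) hNb
    push_cast at this ⊢
    simpa only [neg_sub_neg] using this
  calc _ = |∑ q ∈ Ico N (b * N),
          ((log (b * q + y + 1) - log (b * q + y)) - (log (q + 1) - log q) / b)| := by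
        rw [← hlog, ← sum_sub_distrib]
    _ ≤ ∑ q ∈ Ico N (b * N), ((b * q : ℝ)⁻¹ - (b * (q + 1) : ℝ)⁻¹) :=
        (abs_sum_le_sum_abs _ _).trans <| sum_le_sum fun q hq =>
          abs_log_mul_add_sub_log_sub_le
            (by exact_mod_cast (Nat.pos_of_ne_zero hN).trans_le (mem_Ico.mp hq).1) hy hyb
    _ ≤ (b * N : ℝ)⁻¹ := by rw [htel]; exact sub_le_self _ (by positivity)

theorem tendsto_logMeasureLastDigit {d : ℕ} (hd : d ≤ 2) :
    Tendsto (logMeasureLastDigit d) atTop (𝓝 (1 / 3)) := by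
  have hsum : Tendsto (fun H : ℕ => ∑ q ∈ Ico (3 ^ H : ℕ) (3 ^ (H + 1)),
      (log (3 * q + d + 1) - log (3 * q + d))) atTop (𝓝 (log 3 / 3)) := by
    rw [tendsto_iff_norm_sub_tendsto_zero]
    refine squeeze_zero_norm (fun H => ?_) <| tendsto_inv_atTop_zero.comp <|
      (tendsto_pow_atTop_atTop_of_one_lt (by norm_num : (1 : ℝ) < 3)).comp
        (tendsto_add_atTop_nat 1)
    have := abs_sum_log_mul_add_sub_log_sub_le (b := 3) (pow_ne_zero H three_ne_zero)
      d.cast_nonneg (by norm_cast; omega)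
    push_cast at this
    simpa only [norm_norm, Real.norm_eq_abs, abs_abs, Function.comp_apply, pow_succ'] using this
  have hlog3 : log 3 ≠ 0 := (log_pos (by norm_num)).ne'
  convert hsum.div_const (log 3) using 1
  · ext H
    simp only [logMeasureLastDigit, logb, sum_div, sub_div]
  · field_simp

theorem tendsto_div_add_one_of_tendsto_sub {u : ℕ → ℝ} {l : ℝ}
    (h : Tendsto (fun n => u (n + 1) - u n) atTop (𝓝 l)) :
    Tendsto (fun n : ℕ => u n / (n + 1)) atTop (𝓝 l) := by
  let v : ℕ → ℝ := fun
    | 0 => u 0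
    | k + 1 => u (k + 1) - u k
  have hv : Tendsto v atTop (𝓝 l) := (tendsto_add_atTop_iff_nat 1).mp h
  have hsum (n : ℕ) : ∑ i ∈ range (n + 1), v i = u n := by
    induction n with
    | zero => simp [v]
    | succ n ih => rw [sum_range_succ, ih, add_sub_cancel]
  refine (hv.cesaro.comp (tendsto_add_atTop_nat 1)).congr fun n => ?_
  rw [Function.comp_apply, hsum, Nat.cast_succ, div_eq_inv_mul]

/-- Uniform distribution of frequency in leading digits: `L_{d,H}/(H+1) → 1/3`. -/
theorem Lsum_div_tendsto (d : ℕ) (hd : d ∈ ({0, 1, 2} : Finset ℕ)) :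
    Tendsto (fun H : ℕ => Lsum d H / ((H : ℝ) + 1)) atTop (nhds (1 / 3)) := by
  have hd2 : d ≤ 2 := by simp only [mem_insert, mem_singleton] at hd; omega
  refine tendsto_div_add_one_of_tendsto_sub ((tendsto_logMeasureLastDigit hd2).congr fun H => ?_)
  rw [Lsum_succ (by omega), add_sub_cancel_left]
end

section
/- Assume there exist constants C, D > 0 such that 2^n − 3^m ≥ C·3^m·m^{−D} whenever 3^m < 2^n. Then there is a constant K such that for all n ≥ 2, if the leading ternary digit of 2^n is 1, then the number of consecutive zeros immediately following the leading digit is at most K·ln(ℓ(n)) + K, where ℓ(n) is the number of ternary digits of 2^n. -/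
lemma ofDigits_replicate_zero (b z : ℕ) :
    Nat.ofDigits b (List.replicate z 0) = 0 := by
  induction z with
  | zero => simp
  | succ k ih => simp [List.replicate_succ, Nat.ofDigits_cons, ih]

/-- Assuming a Baker-type lower bound `2^n − 3^m ≥ C·3^m·m^{−D}` (for `3^m < 2^n`), the run of
zeros immediately following a leading ternary digit `1` of `2^n` has length
`O(ln ℓ(n))`, where `ℓ(n)` is the number of ternary digits of `2^n`. -/
theorem zeros_after_leading_one (C D : ℝ) (hC : 0 < C) (hD : 0 < D)
    (h : ∀ m n : ℕ, 0 < m → 0 < n → (3 : ℝ) ^ m < 2 ^ n →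
      (2 : ℝ) ^ n - 3 ^ m ≥ C * 3 ^ m * (m : ℝ) ^ (-D)) :
    ∃ K : ℝ, ∀ n : ℕ, 2 ≤ n →
      ((Nat.digits 3 (2 ^ n)).reverse.head? = some 1) →
      ∀ z : ℕ,
        ((Nat.digits 3 (2 ^ n)).reverse.drop 1).take z = List.replicate z 0 →
        (z : ℝ) ≤ K * Real.log ((Nat.digits 3 (2 ^ n)).length : ℝ) + K := by
  set A := max (Real.log C⁻¹) 0 with hAdef
  have hA : 0 ≤ A := le_max_right _ _
  have hlog3 : (0:ℝ) < Real.log 3 := Real.log_pos (by norm_num)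
  refine ⟨(D + A) / Real.log 3, ?_⟩
  intro n hn hh z hz
  set N := 2 ^ n with hN
  set l := Nat.digits 3 N with hldef
  -- extract structure of reversed digit list
  obtain ⟨t, ht⟩ : ∃ t, l.reverse = 1 :: t := by
    cases hrev : l.reverse with
    | nil => rw [hrev] at hh; simp at hh
    | cons a t =>
      rw [hrev] at hh
      simp only [List.head?_cons, Option.some.injEq] at hh
      exact ⟨t, by rw [hh]⟩
  rw [ht] at hz
  simp only [List.drop_succ_cons, List.drop_zero] at hz
  have hzlen : z ≤ t.length := by
    have := congrArg List.length hz
    simp [List.length_take] at this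
    omega
  set s := (t.drop z).reverse with hsdef
  set k := s.length with hkdef
  have hldecomp : l = s ++ (List.replicate z 0 ++ [1]) := by
    have h1 : t = List.replicate z 0 ++ t.drop z := by
      rw [← hz, List.take_append_drop]
    calc l = l.reverse.reverse := (List.reverse_reverse l).symm
    _ = (1 :: t).reverse := by rw [ht]
    _ = t.reverse ++ [1] := by simp
    _ = s ++ (List.replicate z 0 ++ [1]) := by
        rw [h1]; simp [hsdef, List.reverse_append, List.reverse_replicate,
          List.append_assoc]
  set a := Nat.ofDigits 3 s with hadef
  have hNeq : N = a + 3 ^ (k + z) := by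
    conv_lhs => rw [← Nat.ofDigits_digits 3 N, ← hldef, hldecomp]
    rw [Nat.ofDigits_append, Nat.ofDigits_append, ofDigits_replicate_zero,
      Nat.ofDigits_singleton, List.length_replicate]
    push_cast
    ring
  have ha : a < 3 ^ k := by
    apply Nat.ofDigits_lt_base_pow_length (by norm_num)
    intro x hx
    apply Nat.digits_lt_base (by norm_num) (m := N)
    rw [← hldef, hldecomp]
    simp only [List.mem_append]
    left
    exact hx
  set m := k + z with hmdef
  have hL : l.length = m + 1 := by
    rw [hldecomp]; simp; omega
  have hN4 : 4 ≤ N := by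
    calc 4 = 2 ^ 2 := rfl
    _ ≤ 2 ^ n := Nat.pow_le_pow_right (by norm_num) hn
  have hm1 : 1 ≤ m := by
    by_contra hcon
    have : m = 0 := by omega
    have hk0 : k = 0 := by omega
    rw [this] at hNeq
    rw [hk0] at ha
    simp at hNeq ha
    omega
  have hnd : ¬ 3 ∣ N := by
    intro hdvd
    have := (Nat.Prime.dvd_of_dvd_pow (by norm_num : Nat.Prime 3)) (hN ▸ hdvd)
    norm_num at this
  have ha1 : 1 ≤ a := by
    rcases Nat.eq_zero_or_pos a with h0 | h0
    · exfalso
      apply hnd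
      rw [hNeq, h0, zero_add]
      exact dvd_pow_self 3 (by omega)
    · exact h0
  -- real inequalities
  have hNcast : (N:ℝ) = 2 ^ n := by rw [hN]; push_cast; ring
  have hltR : (3:ℝ) ^ m < 2 ^ n := by
    have h1 : 3 ^ m < N := by omega
    have h2 : ((3:ℕ):ℝ) ^ m < (N:ℝ) := by exact_mod_cast h1
    rw [hNcast] at h2
    exact_mod_cast h2
  have hB := h m n hm1 (by omega) hltR
  have hdiff : (2:ℝ) ^ n - 3 ^ m = (a : ℝ) := by
    have : (N : ℝ) = (a : ℝ) + 3 ^ m := by exact_mod_cast congrArg (Nat.cast (R := ℝ)) hNeq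
    rw [hN] at this
    push_cast at this
    linarith
  have haR : (a : ℝ) < 3 ^ k := by exact_mod_cast ha
  have hkey : C * 3 ^ m * (m:ℝ) ^ (-D) < 3 ^ k := by linarith [hB, hdiff ▸ hB]
  have hmpos : (0:ℝ) < m := by exact_mod_cast hm1
  have hrpow : (m:ℝ) ^ (-D) = ((m:ℝ) ^ D)⁻¹ := by
    rw [Real.rpow_neg (le_of_lt hmpos)]
  have hmD : (0:ℝ) < (m:ℝ) ^ D := Real.rpow_pos_of_pos hmpos D
  have h3k : (0:ℝ) < 3 ^ k := by positivity
  have hsplit : (3:ℝ) ^ m = 3 ^ k * 3 ^ z := by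
    rw [hmdef, pow_add]
  have hkey2 : C * 3 ^ z < (m:ℝ) ^ D := by
    rw [hsplit, hrpow] at hkey
    rw [← mul_lt_mul_iff_right₀ h3k]
    calc (3:ℝ)^k * (C * 3 ^ z) = C * (3^k * 3^z) * 1 := by ring
    _ ≤ C * (3^k*3^z) * (((m:ℝ)^D)⁻¹ * (m:ℝ)^D) := by
        rw [inv_mul_cancel₀ (ne_of_gt hmD)]
    _ = (C * (3^k*3^z) * ((m:ℝ)^D)⁻¹) * (m:ℝ)^D := by ring
    _ < 3^k * (m:ℝ)^D := by
        apply mul_lt_mul_of_pos_right _ hmD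
        calc C * (3^k*3^z) * ((m:ℝ)^D)⁻¹ = C * (3^k*3^z) * ((m:ℝ)^D)⁻¹ := rfl
        _ < 3 ^ k := hkey
  -- take logs
  have hlogs : (z:ℝ) * Real.log 3 < D * Real.log m + A := by
    have hpos1 : (0:ℝ) < C * 3 ^ z := by positivity
    have := Real.log_lt_log hpos1 hkey2
    rw [Real.log_mul (ne_of_gt hC) (by positivity), Real.log_pow,
      Real.log_rpow hmpos] at this
    have hCA : -Real.log C ≤ A := by
      rw [hAdef]
      have : Real.log C⁻¹ = -Real.log C := Real.log_inv C
      rw [← this]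
      exact le_max_left _ _
    linarith
  have hlogm : Real.log m ≤ Real.log (l.length : ℝ) := by
    apply Real.log_le_log hmpos
    rw [hL]
    push_cast
    linarith
  have hlogL : (0:ℝ) ≤ Real.log (l.length : ℝ) := by
    apply Real.log_nonneg
    rw [hL]
    push_cast
    linarith [hm1]
  set LL := Real.log (l.length : ℝ)
  have : (z:ℝ) * Real.log 3 ≤ D * LL + A := by
    have : D * Real.log m ≤ D * LL := by
      apply mul_le_mul_of_nonneg_left hlogm (le_of_lt hD)
    linarith
  have hzle : (z:ℝ) ≤ (D * LL + A) / Real.log 3 := by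
    rw [le_div_iff₀ hlog3]
    linarith
  have hfinal : (D * LL + A) / Real.log 3 ≤ (D + A) / Real.log 3 * LL + (D + A) / Real.log 3 := by
    rw [div_mul_eq_mul_div, ← add_div]
    gcongr ?_ / _
    nlinarith [mul_nonneg hA hlogL]
  linarith
end
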